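/- arXiv:2003.00909 — 3 statements merged into one kernel-verified Lean document; each statement's English description precedes it below -/
import Mathlib

section
/- Let Q be a finite set of points in ℝ^d, and let Δ be a d-dimensional simplex with vertices in Q having maximal d-dimensional volume among all simplices spanned by d+1 points of Q. Then every point of Q lies in the simplex Δ* obtained by reflecting-expanding Δ: namely Δ* is the intersection over all vertices p of Δ of the halfspace bounded by the hyperplane through p parallel to the opposite facet and containing Δ. -/
/-!
Replacing the vertex `p j` of `Δ` by a point `x` multiplies the volume by `|λ_j x|`, where `λ_j` is
the `j`-th barycentric coordinate with respect to `Δ`: the affine map `y ↦ y + λ_j y • (x - p j)`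
fixes the opposite facet, sends `p j` to `x`, and its linear part is a rank-one perturbation of the
identity with determinant `1 + (λ_j x - λ_j (p j)) = λ_j x`. Maximality of `Δ` thus forces
`λ_j x ≤ 1` for every `x ∈ Q`. The functional defining `H_j` is constant on the facet, hence an
affine function of `λ_j` alone, nondecreasing because `Δ ⊆ H_j^+`; so `λ_j x ≤ 1` means `x ∈ H_j^+`.
-/

open MeasureTheory Set Function

namespace AffineBasis

variable {ι k V : Type*} [AddCommGroup V]

section Ring

variable [Ring k] [Module k V]

noncomputable def moveVertex (b : AffineBasis ι k V) (j : ι) (x : V) : V →ᵃ[k] V where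
  toFun y := y + b.coord j y • (x - b j)
  linear := LinearMap.transvection (b.coord j).linear (x - b j)
  map_vadd' y w := by
    have hcoord := (b.coord j).map_vadd y w
    simp only [vadd_eq_add] at hcoord ⊢
    rw [hcoord, LinearMap.transvection.apply, add_smul]
    abel

theorem moveVertex_apply (b : AffineBasis ι k V) (j : ι) (x y : V) :
    b.moveVertex j x y = y + b.coord j y • (x - b j) :=
  rfl

theorem moveVertex_comp_eq_update [DecidableEq ι] (b : AffineBasis ι k V) (j : ι) (x : V) :
    b.moveVertex j x ∘ b = update b j x := by
  funext i
  rcases eq_or_ne i j with rfl | hi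
  · simp [moveVertex_apply]
  · simp [moveVertex_apply, b.coord_apply_ne hi.symm, hi]

theorem eq_lineMap_comp_coord {P : Type*} [AddTorsor V P] (b : AffineBasis ι k P) {j : ι} {a : k}
    {φ : P →ᵃ[k] k} (h : ∀ i ≠ j, φ (b i) = a) :
    φ = (AffineMap.lineMap a (φ (b j))).comp (b.coord j) := by
  refine AffineMap.ext_on b.tot ?_
  rintro _ ⟨i, rfl⟩
  rcases eq_or_ne i j with rfl | hi
  · simp
  · simp [b.coord_apply_ne hi.symm, h i hi]

end Ring

theorem det_moveVertex_linear [CommRing k] [Module k V] [Module.Free k V] [Module.Finite k V]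
    (b : AffineBasis ι k V) (j : ι) (x : V) :
    LinearMap.det (b.moveVertex j x).linear = b.coord j x := by
  have hlinear := (b.coord j).linearMap_vsub x (b j)
  simp only [vsub_eq_sub, coord_apply_eq] at hlinear
  change LinearMap.det (LinearMap.transvection _ _) = _
  rw [LinearMap.transvection.det, hlinear]
  abel

end AffineBasis

section AddHaar

variable {E : Type*} [NormedAddCommGroup E] [NormedSpace ℝ E] [FiniteDimensional ℝ E]
  [MeasurableSpace E] [BorelSpace E] (μ : Measure E) [μ.IsAddHaarMeasure]

theorem MeasureTheory.Measure.addHaar_image_affineMap (T : E →ᵃ[ℝ] E) (s : Set E) :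
    μ (T '' s) = ENNReal.ofReal |LinearMap.det T.linear| * μ s := by
  have hT : ⇑T = (· + T 0) ∘ T.linear := T.decomp
  rw [hT, image_comp, image_add_right, measure_preimage_add_right,
    Measure.addHaar_image_linearMap]

variable {ι : Type*} (b : AffineBasis ι ℝ E)

theorem AffineBasis.addHaar_convexHull_update [DecidableEq ι] (j : ι) (x : E) :
    μ (convexHull ℝ (range (update b j x))) =
      ENNReal.ofReal |b.coord j x| * μ (convexHull ℝ (range b)) := by
  rw [← b.moveVertex_comp_eq_update, range_comp, ← AffineMap.image_convexHull,
    Measure.addHaar_image_affineMap, b.det_moveVertex_linear]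

theorem AffineBasis.abs_coord_le_one_of_addHaar_le [DecidableEq ι] [Finite ι] {j : ι} {x : E}
    (h : μ (convexHull ℝ (range (update b j x))) ≤ μ (convexHull ℝ (range b))) :
    |b.coord j x| ≤ 1 := by
  have hpos : 0 < μ (convexHull ℝ (range b)) := Measure.measure_pos_of_nonempty_interior _
    (interior_convexHull_nonempty_iff_affineSpan_eq_top.2 b.tot)
  have hfin : μ (convexHull ℝ (range b)) < ⊤ :=
    ((finite_range b).isCompact_convexHull ℝ).measure_lt_top
  rw [b.addHaar_convexHull_update μ] at h
  exact ENNReal.ofReal_le_one.1 <|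
    (ENNReal.mul_le_mul_iff_left hpos.ne' hfin.ne).1 (by rwa [one_mul])

end AddHaar

theorem maximal_simplex_expanded_contains_general
    (d : ℕ) (hd : 1 ≤ d) (Q : Finset (EuclideanSpace ℝ (Fin d)))
    (p : Fin (d + 1) → EuclideanSpace ℝ (Fin d))
    (hp : AffineIndependent ℝ p) (hpQ : Set.range p ⊆ (Q : Set (EuclideanSpace ℝ (Fin d))))
    (hmax : ∀ q : Fin (d + 1) → EuclideanSpace ℝ (Fin d),
      Set.range q ⊆ (Q : Set (EuclideanSpace ℝ (Fin d))) →
      volume (convexHull ℝ (Set.range q)) ≤ volume (convexHull ℝ (Set.range p)))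
    (f : Fin (d + 1) → (EuclideanSpace ℝ (Fin d) →ₗ[ℝ] ℝ))
    (hker : ∀ j, ∀ w ∈ (affineSpan ℝ (p '' {i | i ≠ j})).direction, f j w = 0)
    (hside : ∀ j, convexHull ℝ (Set.range p) ⊆ {x | f j x ≤ f j (p j)}) :
    (Q : Set (EuclideanSpace ℝ (Fin d))) ⊆ ⋂ j, {x | f j x ≤ f j (p j)} := by
  classical
  let b : AffineBasis (Fin (d + 1)) ℝ (EuclideanSpace ℝ (Fin d)) :=
    ⟨p, hp, by simp [hp.affineSpan_eq_top_iff_card_eq_finrank_add_one]⟩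
  have hb : ⇑b = p := rfl
  intro x hx
  refine mem_iInter.2 fun j => ?_
  have : Nontrivial (Fin (d + 1)) := Fin.nontrivial_iff_two_le.2 (by omega)
  obtain ⟨i₀, hi₀⟩ := exists_ne j
  have hfacet : ∀ i ≠ j, (f j).toAffineMap (p i) = f j (p i₀) := fun i hi => by
    have hmem : ∀ {k}, k ≠ j → p k ∈ affineSpan ℝ (p '' {i | i ≠ j}) := fun hk =>
      subset_affineSpan ℝ _ ⟨_, hk, rfl⟩
    simpa [sub_eq_zero] using hker j _ (AffineSubspace.vsub_mem_direction (hmem hi) (hmem hi₀))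
  have hupdate : range (update p j x) ⊆ Q := by
    rintro _ ⟨i, rfl⟩
    rcases eq_or_ne i j with rfl | hi
    · simpa using hx
    · simpa [hi] using hpQ (mem_range_self i)
  have hcoord : |b.coord j x| ≤ 1 := b.abs_coord_le_one_of_addHaar_le volume (hmax _ hupdate)
  have hi₀j : f j (p i₀) ≤ f j (p j) := hside j (subset_convexHull ℝ _ (mem_range_self i₀))
  have hfx := congrArg (· x) (b.eq_lineMap_comp_coord hfacet)
  simp only [LinearMap.coe_toAffineMap, AffineMap.coe_comp, comp_apply,
    AffineMap.lineMap_apply_ring', hb] at hfx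
  show f j x ≤ f j (p j)
  rw [hfx]
  nlinarith [abs_le.1 hcoord]

/-- Let `Q ⊆ ℝ^d` be a finite set in general position and let `Δ = conv(p 0, …, p d)` be a
simplex with vertices in `Q` of maximal volume among all simplices spanned by `d+1` points
of `Q`. For each vertex `p j`, let `{x | f j x ≤ f j (p j)}` be the halfspace bounded by the
hyperplane through `p j` parallel to the opposite facet (encoded by a nonzero functional
`f j` vanishing on the direction of the facet's affine hull) containing `Δ`. Then every
point of `Q` lies in `Δ* = ⋂ j H_j^+`. -/
theorem maximal_simplex_expanded_contains
    (d : ℕ) (hd : 1 ≤ d) (Q : Finset (EuclideanSpace ℝ (Fin d)))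
    (hgp : ∀ T : Finset (EuclideanSpace ℝ (Fin d)), ↑T ⊆ (Q : Set (EuclideanSpace ℝ (Fin d))) →
      T.card ≤ d + 1 →
      AffineIndependent ℝ (fun x : T => (x : EuclideanSpace ℝ (Fin d))))
    (p : Fin (d + 1) → EuclideanSpace ℝ (Fin d))
    (hp : AffineIndependent ℝ p) (hpQ : Set.range p ⊆ (Q : Set (EuclideanSpace ℝ (Fin d))))
    (hmax : ∀ q : Fin (d + 1) → EuclideanSpace ℝ (Fin d),
      Set.range q ⊆ (Q : Set (EuclideanSpace ℝ (Fin d))) →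
      volume (convexHull ℝ (Set.range q)) ≤ volume (convexHull ℝ (Set.range p)))
    (f : Fin (d + 1) → (EuclideanSpace ℝ (Fin d) →ₗ[ℝ] ℝ))
    (hf0 : ∀ j, f j ≠ 0)
    (hker : ∀ j, ∀ w ∈ (affineSpan ℝ (p '' {i | i ≠ j})).direction, f j w = 0)
    (hside : ∀ j, convexHull ℝ (Set.range p) ⊆ {x | f j x ≤ f j (p j)}) :
    (Q : Set (EuclideanSpace ℝ (Fin d))) ⊆ ⋂ j, {x | f j x ≤ f j (p j)} :=
  maximal_simplex_expanded_contains_general d hd Q p hp hpQ hmax f hker hside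
end

section
/- For a finite point set S in ℝ^d in general position, the map sending a subset G ⊆ S in convex position to S ∩ conv(G) is a bijection between the collection of subsets of S in convex position and the collection of islands in S; its inverse sends an island I to the set of vertices (extreme points) of conv(I). In particular, the number of subsets of S in convex position equals the number of islands in S. -/
/-!
For `G ⊆ S` one has `conv (S ∩ conv G) = conv G`, so `S ∩ conv G` is an island, and an island `I`
is recovered from any `G` with `conv G = conv I` as `S ∩ conv G`. By Krein–Milman a finite set `I`
satisfies `conv (ext (conv I)) = conv I`. Conversely a finite `G` in convex position is the set of
extreme points of its hull: a point `p ∈ G` that is not extreme would lie in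
`conv (ext (conv G)) ⊆ conv (G \ {p})`.
-/

open Set

section Hull

variable {𝕜 E : Type*} [Semiring 𝕜] [PartialOrder 𝕜] [AddCommMonoid E] [Module 𝕜 E]

theorem convexHull_inter_convexHull_of_subset {S G : Set E} (hG : G ⊆ S) :
    convexHull 𝕜 (S ∩ convexHull 𝕜 G) = convexHull 𝕜 G :=
  (convexHull_min inter_subset_right (convex_convexHull 𝕜 G)).antisymm
    (convexHull_mono (subset_inter hG (subset_convexHull 𝕜 G)))

theorem mapsTo_inter_convexHull (S : Set E) :
    MapsTo (fun G => S ∩ convexHull 𝕜 G) {G | G ⊆ S} {I | I ⊆ S ∧ convexHull 𝕜 I ∩ S = I} :=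
  fun G hG => ⟨inter_subset_left, by rw [convexHull_inter_convexHull_of_subset hG, inter_comm]⟩

end Hull

theorem mapsTo_extremePoints_convexHull {𝕜 E : Type*} [Field 𝕜] [LinearOrder 𝕜]
    [IsStrictOrderedRing 𝕜] [AddCommGroup E] [Module 𝕜 E] (S : Set E) :
    MapsTo (fun I => (convexHull 𝕜 I).extremePoints 𝕜)
      {I | I ⊆ S ∧ convexHull 𝕜 I ∩ S = I}
      {G | G ⊆ S ∧ ∀ p ∈ G, p ∉ convexHull 𝕜 (G \ {p})} := fun I hI =>
  ⟨extremePoints_convexHull_subset.trans hI.1, convexIndependent_set_iff_notMem_convexHull_sdiff.1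
    (convex_convexHull 𝕜 I).convexIndependent_extremePoints⟩

section KreinMilman

variable {E : Type*} [AddCommGroup E] [Module ℝ E] [TopologicalSpace E] [T2Space E]
  [IsTopologicalAddGroup E] [ContinuousSMul ℝ E] [LocallyConvexSpace ℝ E]

theorem Set.Finite.convexHull_extremePoints_convexHull {G : Set E} (hG : G.Finite) :
    convexHull ℝ ((convexHull ℝ G).extremePoints ℝ) = convexHull ℝ G := by
  have hext : ((convexHull ℝ G).extremePoints ℝ).Finite := hG.subset extremePoints_convexHull_subset
  rw [← (hext.isClosed_convexHull ℝ).closure_eq]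
  exact closure_convexHull_extremePoints (hG.isCompact_convexHull ℝ) (convex_convexHull ℝ G)

theorem Set.Finite.extremePoints_convexHull_eq {G : Set E} (hG : G.Finite)
    (hpos : ∀ p ∈ G, p ∉ convexHull ℝ (G \ {p})) :
    (convexHull ℝ G).extremePoints ℝ = G := by
  refine extremePoints_convexHull_subset.antisymm fun p hp => ?_
  by_contra hpext
  have hsub : (convexHull ℝ G).extremePoints ℝ ⊆ G \ {p} := fun x hx =>
    ⟨extremePoints_convexHull_subset hx, fun hxp => hpext (hxp ▸ hx)⟩
  refine hpos p hp (convexHull_mono hsub ?_)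
  rw [hG.convexHull_extremePoints_convexHull]
  exact subset_convexHull ℝ G hp

theorem Set.Finite.invOn_extremePoints_convexHull_inter_convexHull {S : Set E} (hS : S.Finite) :
    InvOn (fun I => (convexHull ℝ I).extremePoints ℝ) (fun G => S ∩ convexHull ℝ G)
      {G | G ⊆ S ∧ ∀ p ∈ G, p ∉ convexHull ℝ (G \ {p})}
      {I | I ⊆ S ∧ convexHull ℝ I ∩ S = I} := by
  constructor
  · rintro G ⟨hGS, hpos⟩
    dsimp only
    rw [convexHull_inter_convexHull_of_subset hGS, (hS.subset hGS).extremePoints_convexHull_eq hpos]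
  · rintro I ⟨hIS, hisland⟩
    dsimp only
    rw [(hS.subset hIS).convexHull_extremePoints_convexHull, inter_comm, hisland]

end KreinMilman

theorem convexPosition_islands_bijection_general
    (d : ℕ) (S : Set (EuclideanSpace ℝ (Fin d))) (hS : S.Finite) :
    Set.BijOn (fun G => S ∩ convexHull ℝ G)
      {G | G ⊆ S ∧ ∀ p ∈ G, p ∉ convexHull ℝ (G \ {p})}
      {I | I ⊆ S ∧ convexHull ℝ I ∩ S = I} ∧
    Set.InvOn (fun I => Set.extremePoints ℝ (convexHull ℝ I))
      (fun G => S ∩ convexHull ℝ G)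
      {G | G ⊆ S ∧ ∀ p ∈ G, p ∉ convexHull ℝ (G \ {p})}
      {I | I ⊆ S ∧ convexHull ℝ I ∩ S = I} ∧
    Nat.card {G | G ⊆ S ∧ ∀ p ∈ G, p ∉ convexHull ℝ (G \ {p})}
      = Nat.card {I | I ⊆ S ∧ convexHull ℝ I ∩ S = I} := by
  have hinv := hS.invOn_extremePoints_convexHull_inter_convexHull
  have hbij := hinv.bijOn ((mapsTo_inter_convexHull S).mono_left fun _ hG => hG.1)
    (mapsTo_extremePoints_convexHull S)
  exact ⟨hbij, hinv, Nat.card_congr (hbij.equiv _)⟩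

/-- For a finite point set `S ⊆ ℝ^d` in general position, the map `G ↦ S ∩ conv G` is a
bijection from the subsets of `S` in convex position onto the islands in `S`, with inverse
sending an island `I` to the set of extreme points of `conv I`. In particular the number of
subsets of `S` in convex position equals the number of islands in `S`. -/
theorem convexPosition_islands_bijection
    (d : ℕ) (S : Set (EuclideanSpace ℝ (Fin d))) (hS : S.Finite)
    (hgp : ∀ T : Finset (EuclideanSpace ℝ (Fin d)), ↑T ⊆ S → T.card ≤ d + 1 →
      AffineIndependent ℝ (fun x : T => (x : EuclideanSpace ℝ (Fin d)))) :
    Set.BijOn (fun G => S ∩ convexHull ℝ G)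
      {G | G ⊆ S ∧ ∀ p ∈ G, p ∉ convexHull ℝ (G \ {p})}
      {I | I ⊆ S ∧ convexHull ℝ I ∩ S = I} ∧
    Set.InvOn (fun I => Set.extremePoints ℝ (convexHull ℝ I))
      (fun G => S ∩ convexHull ℝ G)
      {G | G ⊆ S ∧ ∀ p ∈ G, p ∉ convexHull ℝ (G \ {p})}
      {I | I ⊆ S ∧ convexHull ℝ I ∩ S = I} ∧
    Nat.card {G | G ⊆ S ∧ ∀ p ∈ G, p ∉ convexHull ℝ (G \ {p})}
      = Nat.card {I | I ⊆ S ∧ convexHull ℝ I ∩ S = I} :=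
  convexPosition_islands_bijection_general d S hS
end

section
/- Let S be a set of n points in general position in ℝ^d with n ≥ k ≥ d. Then S contains at least binom(n,d) / binom(k,d) k-islands. In particular, for fixed d and k, every such set contains Ω(n^d) k-islands. -/
/-!
Fix a `d`-subset `T` of `S` and a nonzero linear functional `f` that is constant (`= r`) on `T`,
i.e. a hyperplane through `T`. Adding to `T` the `k - d` points of `S \ T` with smallest
`|f - r|` gives a `k`-island: a point `x ∈ S` in the convex hull of this set `I` but not in `I`
would, after flipping the sign of `f`, maximise `f` over `I ∪ {x}`, hence lie in the convex hull
of the points of `I` on the hyperplane `{f = f x}`. By general position at most `d` points of `S`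
lie on a hyperplane, so these points and `x` are affinely independent, which is absurd.
A `k`-island contains only `binom(k, d)` subsets of size `d`, so double counting the `d`-subsets
of `S` gives `binom(n, d) ≤ binom(k, d) · #islands`.
-/

open Module Finset

namespace Finset

lemma exists_subset_card_eq_forall_le {α β : Type*} [DecidableEq α] [LinearOrder β]
    (μ : α → β) {s : Finset α} {m : ℕ} (hm : m ≤ #s) :
    ∃ R ⊆ s, #R = m ∧ ∀ x ∈ s \ R, ∀ y ∈ R, μ y ≤ μ x := by
  induction m with
  | zero => exact ⟨∅, empty_subset s, card_empty, by simp⟩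
  | succ m ih =>
    obtain ⟨R, hRs, hRm, hR⟩ := ih (by omega)
    obtain ⟨x, hx, hxmin⟩ := (s \ R).exists_min_image μ
      (card_pos.1 (by rw [card_sdiff_of_subset hRs]; omega))
    have hxR : x ∉ R := (mem_sdiff.1 hx).2
    refine ⟨insert x R, insert_subset (mem_sdiff.1 hx).1 hRs,
      by rw [card_insert_of_notMem hxR, hRm], fun z hz y hy => ?_⟩
    have hzR : z ∈ s \ R := by
      simp only [mem_sdiff, mem_insert, not_or] at hz ⊢
      exact ⟨hz.1, hz.2.2⟩
    rcases mem_insert.1 hy with rfl | hyR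
    · exact hxmin z hzR
    · exact hR z hzR y hyR

lemma choose_card_le_card_mul_choose_of_cover {α : Type*} [DecidableEq α] {S : Finset α}
    {𝓘 : Finset (Finset α)} {d k : ℕ} (h𝓘 : ∀ I ∈ 𝓘, #I = k)
    (hcover : ∀ T ⊆ S, #T = d → ∃ I ∈ 𝓘, T ⊆ I) : (#S).choose d ≤ #𝓘 * k.choose d := by
  rw [← card_powersetCard]
  calc #(S.powersetCard d) ≤ #(𝓘.biUnion (powersetCard d)) := card_le_card fun T hT => by
        obtain ⟨hTS, hTd⟩ := mem_powersetCard.1 hT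
        obtain ⟨I, hI, hTI⟩ := hcover T hTS hTd
        exact mem_biUnion.2 ⟨I, hI, mem_powersetCard.2 ⟨hTI, hTd⟩⟩
    _ ≤ #𝓘 * k.choose d := card_biUnion_le_card_mul _ _ _ fun I hI => by
        rw [card_powersetCard, h𝓘 I hI]

end Finset

section Convex

variable {𝕜 V : Type*} [Field 𝕜] [AddCommGroup V] [Module 𝕜 V]

variable (𝕜) in
def InGeneralPosition (S : Finset V) : Prop :=
  ∀ T ⊆ S, #T ≤ finrank 𝕜 V + 1 → AffineIndependent 𝕜 ((↑) : T → V)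

lemma vectorSpan_le_ker_of_forall_eq (f : V →ₗ[𝕜] 𝕜) {s : Set V} {r : 𝕜}
    (h : ∀ y ∈ s, f y = r) : vectorSpan 𝕜 s ≤ LinearMap.ker f := by
  rw [vectorSpan_def, Submodule.span_le]
  rintro _ ⟨a, ha, b, hb, rfl⟩
  simp [h a ha, h b hb]

lemma exists_ne_zero_forall_eq_of_card_le_finrank [FiniteDimensional 𝕜 V] {T : Finset V}
    (hT : T.Nonempty) (hTd : #T ≤ finrank 𝕜 V) :
    ∃ f : V →ₗ[𝕜] 𝕜, f ≠ 0 ∧ ∃ r, ∀ y ∈ T, f y = r := by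
  obtain ⟨t, ht⟩ := hT
  have hlt : vectorSpan 𝕜 (Set.range ((↑) : T → V)) < ⊤ := by
    have : Nonempty T := ⟨⟨t, ht⟩⟩
    have := finrank_vectorSpan_range_add_one_le 𝕜 ((↑) : T → V)
    exact Submodule.lt_top_of_finrank_lt_finrank (by rw [Fintype.card_coe] at this; omega)
  obtain ⟨f, hf, hker⟩ := Submodule.exists_le_ker_of_lt_top _ hlt
  refine ⟨f, hf, f t, fun y hy => ?_⟩
  have := hker (vsub_mem_vectorSpan 𝕜 (Set.mem_range_self ⟨y, hy⟩) (Set.mem_range_self ⟨t, ht⟩))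
  rwa [LinearMap.mem_ker, vsub_eq_sub, map_sub, sub_eq_zero] at this

lemma InGeneralPosition.card_le_finrank_of_forall_eq [FiniteDimensional 𝕜 V] {S A : Finset V}
    (hS : InGeneralPosition 𝕜 S) (hAS : A ⊆ S) {f : V →ₗ[𝕜] 𝕜} (hf : f ≠ 0) {r : 𝕜}
    (hA : ∀ y ∈ A, f y = r) : #A ≤ finrank 𝕜 V := by
  by_contra! hlt
  obtain ⟨B, hBA, hB⟩ := exists_subset_card_eq (Nat.succ_le_of_lt hlt)
  have hspan := (hS B (hBA.trans hAS) hB.le).finrank_vectorSpan (n := finrank 𝕜 V) (by simp [hB])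
  have hker : LinearMap.ker f ≠ ⊤ := by rwa [Ne, LinearMap.ker_eq_top]
  have hB_ker := vectorSpan_le_ker_of_forall_eq f (s := Set.range ((↑) : B → V)) (r := r)
    (by simpa using fun y hy => hA y (hBA hy))
  have := (Submodule.finrank_mono hB_ker).trans_lt (Submodule.finrank_lt hker)
  omega

lemma notMem_affineSpan_of_affineIndependent_insert [DecidableEq V] {J : Finset V} {x : V}
    (hi : AffineIndependent 𝕜 ((↑) : ↥(insert x J) → V)) (hx : x ∉ J) :
    x ∉ affineSpan 𝕜 (J : Set V) := by
  have himage : ((↑) : ↥(insert x J) → V) '' {z | (z : V) ∈ J} = J := by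
    ext y; simp +contextual
  simpa [himage, hx] using hi.mem_affineSpan_iff ⟨x, mem_insert_self x J⟩ {z | (z : V) ∈ J}

variable [LinearOrder 𝕜] [IsStrictOrderedRing 𝕜]

variable (𝕜) in
def IsIsland (S I : Finset V) : Prop :=
  I ⊆ S ∧ convexHull 𝕜 (I : Set V) ∩ S = I

lemma mem_convexHull_filter_eq_of_forall_le (f : V →ₗ[𝕜] 𝕜) {s : Finset V} {x : V}
    (hx : x ∈ convexHull 𝕜 (s : Set V)) (hle : ∀ y ∈ s, f y ≤ f x) :
    x ∈ convexHull 𝕜 (s.filter (f · = f x) : Set V) := by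
  obtain ⟨w, hw₀, hw₁, hwx⟩ := mem_convexHull'.1 hx
  have hgap : ∑ y ∈ s, w y * (f x - f y) = 0 := by
    simp only [mul_sub, sum_sub_distrib, ← sum_mul, hw₁, one_mul]
    rw [← hwx, map_sum]
    simp [smul_eq_mul]
  have hsupp : ∀ y ∈ s, w y ≠ 0 → f y = f x := fun y hy hwy => by
    have := (sum_eq_zero_iff_of_nonneg fun z hz =>
      mul_nonneg (hw₀ z hz) (sub_nonneg.2 (hle z hz))).1 hgap y hy
    exact (sub_eq_zero.1 ((mul_eq_zero.1 this).resolve_left hwy)).symm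
  refine mem_convexHull'.2 ⟨w, fun y hy => hw₀ y (mem_filter.1 hy).1, ?_, ?_⟩
  · rwa [sum_filter_of_ne hsupp]
  · rwa [sum_filter_of_ne fun y hy hwy => hsupp y hy (left_ne_zero_of_smul hwy)]

lemma InGeneralPosition.isIsland_of_forall_abs_sub_le [FiniteDimensional 𝕜 V] {S I : Finset V}
    (hS : InGeneralPosition 𝕜 S) (hIS : I ⊆ S) {f : V →ₗ[𝕜] 𝕜} (hf : f ≠ 0) (r : 𝕜)
    (hclose : ∀ x ∈ S, x ∉ I → ∀ y ∈ I, |f y - r| ≤ |f x - r|) : IsIsland 𝕜 S I := by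
  classical
  refine ⟨hIS, (Set.subset_inter (subset_convexHull 𝕜 _) (coe_subset.2 hIS)).antisymm' ?_⟩
  rintro x ⟨hxI, hxS⟩
  by_contra hx
  -- orient `f` so that `x` is the farthest point from the hyperplane on the positive side
  set g : V →ₗ[𝕜] 𝕜 := if r ≤ f x then f else -f with hg_def
  have hg : g ≠ 0 := by rw [hg_def]; split_ifs <;> simpa using hf
  have hgx : ∀ y ∈ I, g y ≤ g x := fun y hy => by
    have := hclose x hxS hx y hy
    by_cases h : r ≤ f x
    · simp only [hg_def, if_pos h]
      linarith [le_abs_self (f y - r), abs_of_nonneg (sub_nonneg.2 h)]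
    · simp only [hg_def, if_neg h, LinearMap.neg_apply, neg_le_neg_iff]
      linarith [neg_abs_le (f y - r), abs_of_neg (sub_neg.2 (not_le.1 h))]
  set J := I.filter (g · = g x)
  have hxJ : x ∈ convexHull 𝕜 (J : Set V) := mem_convexHull_filter_eq_of_forall_le g hxI hgx
  have hJS : insert x J ⊆ S := insert_subset hxS ((filter_subset _ _).trans hIS)
  have hcard_insert : #(insert x J) ≤ finrank 𝕜 V :=
    hS.card_le_finrank_of_forall_eq hJS hg (r := g x) (by simp +contextual [J])
  exact notMem_affineSpan_of_affineIndependent_insert (hS _ hJS (by omega))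
    (fun h => hx (mem_filter.1 h).1) (convexHull_subset_affineSpan _ hxJ)

lemma InGeneralPosition.exists_isIsland_superset [FiniteDimensional 𝕜 V] {S T : Finset V}
    (hS : InGeneralPosition 𝕜 S) (hTS : T ⊆ S) (hT : T.Nonempty) (hTd : #T ≤ finrank 𝕜 V)
    {k : ℕ} (hTk : #T ≤ k) (hkS : k ≤ #S) : ∃ I, T ⊆ I ∧ #I = k ∧ IsIsland 𝕜 S I := by
  classical
  obtain ⟨f, hf, r, hr⟩ := exists_ne_zero_forall_eq_of_card_le_finrank hT hTd
  obtain ⟨R, hRT, hRcard, hR⟩ := (S \ T).exists_subset_card_eq_forall_le (fun z => |f z - r|)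
    (m := k - #T) (by rw [card_sdiff_of_subset hTS]; omega)
  have hdisj : Disjoint T R := disjoint_of_subset_right hRT disjoint_sdiff
  refine ⟨T ∪ R, subset_union_left, by rw [card_union_of_disjoint hdisj, hRcard]; omega,
    hS.isIsland_of_forall_abs_sub_le (union_subset hTS (hRT.trans sdiff_subset)) hf r
      fun x hxS hx y hy => ?_⟩
  rcases mem_union.1 hy with hyT | hyR
  · simp [hr y hyT]
  · exact hR x (by simp_all) y hyR

end Convex

/-- Every set `S` of `n` points in general position in `ℝ^d` with `n ≥ k ≥ d` contains at
least `binom(n,d)/binom(k,d)` `k`-islands (hence `Ω(n^d)` of them for fixed `d` and `k`). -/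
theorem card_k_islands_ge
    (d k n : ℕ) (hd : 1 ≤ d) (hdk : d ≤ k) (hkn : k ≤ n)
    (S : Finset (EuclideanSpace ℝ (Fin d))) (hcard : S.card = n)
    (hgp : ∀ T : Finset (EuclideanSpace ℝ (Fin d)), T ⊆ S → T.card ≤ d + 1 →
      AffineIndependent ℝ (fun x : T => (x : EuclideanSpace ℝ (Fin d)))) :
    ((n.choose d : ℝ) / (k.choose d : ℝ)) ≤
      (Set.ncard {I : Finset (EuclideanSpace ℝ (Fin d)) |
        I ⊆ S ∧ I.card = k ∧
        convexHull ℝ (I : Set (EuclideanSpace ℝ (Fin d))) ∩ (S : Set (EuclideanSpace ℝ (Fin d)))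
          = (I : Set (EuclideanSpace ℝ (Fin d)))} : ℝ) := by
  classical
  have hdim : finrank ℝ (EuclideanSpace ℝ (Fin d)) = d := finrank_euclideanSpace_fin
  have hS : InGeneralPosition ℝ S := fun T hTS hT => hgp T hTS (by rwa [hdim] at hT)
  set islands := S.powerset.filter fun I => #I = k ∧ IsIsland ℝ S I with h_islands
  have hislands : {I : Finset (EuclideanSpace ℝ (Fin d)) | I ⊆ S ∧ #I = k ∧
      convexHull ℝ (I : Set (EuclideanSpace ℝ (Fin d))) ∩ S = I} = (islands : Set _) := by
    ext I
    rw [h_islands, coe_filter]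
    simp only [Set.mem_ofPred_eq, mem_powerset, IsIsland]
    tauto
  have hcount : n.choose d ≤ #islands * k.choose d := by
    refine hcard ▸ choose_card_le_card_mul_choose_of_cover (by simp +contextual [h_islands])
      fun T hTS hT => ?_
    obtain ⟨I, hTI, hI, hIsl⟩ := hS.exists_isIsland_superset (k := k) hTS (card_pos.1 (by omega))
      (by omega) (by omega) (by omega)
    exact ⟨I, by simpa [h_islands, hI] using ⟨hIsl.1, hIsl⟩, hTI⟩
  rw [hislands, Set.ncard_coe_finset, div_le_iff₀ (by exact_mod_cast Nat.choose_pos hdk)]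
  exact_mod_cast hcount
end
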